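/- Let p and p' be open-minded Borel probability measures on the Cantor space ℕ → Bool such that p is absolutely continuous with respect to p'. Then for p-almost every sequence ω, the total variational distance between the conditional measures converges to zero: sup over all Borel sets A of |p(A | Γ_{ω|n}) − p'(A | Γ_{ω|n})| tends to 0 as n → ∞. -/

import Mathlib

open MeasureTheory ProbabilityTheory Filter

/-- The cylinder set of infinite binary sequences whose initial segment is `x`. -/
def cylinder (x : List Bool) : Set (ℕ → Bool) :=
  {ω | ∀ i : Fin x.length, ω i = x.get i}

/-- The initial segment of length `n` of an infinite binary sequence `ω`. -/
def seg (ω : ℕ → Bool) (n : ℕ) : List Bool :=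
  List.ofFn (fun i : Fin n => ω i)

/-!
Let `f = dp/dp'` and `Fₙ = E_{p'}[f | ω₀, …, ωₙ]`. On the cylinder `Γ` of `ω|n+1` one has
`Fₙ = p(Γ)/p'(Γ)`, and writing `p(A ∩ Γ) = ∫_{A ∩ Γ} f dp'` gives
`|p(A | Γ) - p'(A | Γ)| ≤ E_{p'}[|f - Fₙ| | ω₀, …, ωₙ] / Fₙ` uniformly in `A`.
By Lévy's upward theorem `Fₙ → f`, and `f > 0` `p`-a.s. The numerator tends to `0`: for `m ≤ n`
it is at most `E[|f - Fₘ| | ω₀, …, ωₙ] + |Fₘ - Fₙ|`, and both terms tend to `|f - Fₘ|` as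
`n → ∞`, which is small for large `m`.
-/

open scoped Topology

theorem condExp_apply_eq_setAverage {Ω : Type*} {m m₀ : MeasurableSpace Ω} {μ : Measure Ω}
    [IsFiniteMeasure μ] (hm : m ≤ m₀) {g : Ω → ℝ} (hg : Integrable g μ) {s : Set Ω}
    (hs : MeasurableSet[m] s) (hμs : μ s ≠ 0) {ω : Ω}
    (hconst : ∀ x ∈ s, μ[g | m] x = μ[g | m] ω) :
    μ[g | m] ω = ⨍ x in s, g x ∂μ := by
  calc μ[g | m] ω = ⨍ x in s, μ[g | m] x ∂μ := by
        rw [setAverage_congr_fun (hm s hs) (ae_of_all _ hconst),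
          setAverage_const hμs (measure_ne_top _ _)]
    _ = ⨍ x in s, g x ∂μ := by simp only [setAverage_eq, setIntegral_condExp hm hg hs]

theorem iSup_piLE {ι : Type*} [Preorder ι] {X : ι → Type*} [∀ i, MeasurableSpace (X i)] :
    ⨆ i, Filtration.piLE (X := X) i = MeasurableSpace.pi := by
  refine le_antisymm (iSup_le Filtration.piLE.le) (iSup_le fun i => le_iSup_of_le i ?_)
  rw [← measurable_iff_comap_le]
  exact (measurable_pi_apply (X := fun j : Set.Iic i => X j) ⟨i, le_rfl⟩).comp
    (comap_measurable _)

theorem tendsto_zero_of_le_add_abs_sub {a : ℕ → ℝ} {b : ℕ → ℕ → ℝ} {F : ℕ → ℝ} {L : ℝ}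
    (ha : ∀ n, 0 ≤ a n) (hF : Tendsto F atTop (𝓝 L))
    (hb : ∀ m, Tendsto (b m) atTop (𝓝 |L - F m|))
    (hab : ∀ m n, m ≤ n → a n ≤ b m n + |F m - F n|) :
    Tendsto a atTop (𝓝 0) := by
  refine tendsto_order.2 ⟨fun c hc => .of_forall fun n => hc.trans_le (ha n), fun c hc => ?_⟩
  obtain ⟨m, hm⟩ := Metric.tendsto_atTop.1 hF (c / 3) (by positivity)
  have hLm : |L - F m| < c / 3 := by simpa [Real.dist_eq, abs_sub_comm] using hm m le_rfl
  have hbm : ∀ᶠ n in atTop, b m n < c / 2 := (hb m).eventually_lt_const (by linarith)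
  have hFm : ∀ᶠ n in atTop, |F m - F n| < c / 2 :=
    ((tendsto_const_nhds.sub hF).abs).eventually_lt_const (by rw [abs_sub_comm]; linarith)
  filter_upwards [hbm, hFm, eventually_ge_atTop m] with n hbn hFn hmn
  linarith [hab m n hmn]

section Martingale

variable {Ω : Type*} {m₀ : MeasurableSpace Ω} {μ : Measure Ω} [IsFiniteMeasure μ]
  {ℱ : Filtration ℕ m₀} {f : Ω → ℝ}

theorem condExp_abs_sub_condExp_le (hf : Integrable f μ) {m n : ℕ} (hmn : m ≤ n) :
    μ[fun x => |f x - μ[f | ℱ n] x| | ℱ n] ≤ᵐ[μ]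
      μ[fun x => |f x - μ[f | ℱ m] x| | ℱ n] + fun x => |μ[f | ℱ m] x - μ[f | ℱ n] x| := by
  have hdev : ∀ k, Integrable (fun x => |f x - μ[f | ℱ k] x|) μ :=
    fun k => (hf.sub integrable_condExp).abs
  have hjump : Integrable (fun x => |μ[f | ℱ m] x - μ[f | ℱ n] x|) μ :=
    (integrable_condExp.sub integrable_condExp).abs
  have hjump_meas : StronglyMeasurable[ℱ n] fun x => |μ[f | ℱ m] x - μ[f | ℱ n] x| :=
    continuous_abs.comp_stronglyMeasurable
      ((stronglyMeasurable_condExp.mono (ℱ.mono hmn)).sub stronglyMeasurable_condExp)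
  calc μ[fun x => |f x - μ[f | ℱ n] x| | ℱ n]
      ≤ᵐ[μ] μ[(fun x => |f x - μ[f | ℱ m] x|) + fun x => |μ[f | ℱ m] x - μ[f | ℱ n] x| | ℱ n] :=
        condExp_mono (hdev n) ((hdev m).add hjump) (.of_forall fun x => abs_sub_le _ _ _)
    _ =ᵐ[μ] _ := by
        filter_upwards [condExp_add (hdev m) hjump (ℱ n)] with x hx
        rw [hx, Pi.add_apply, Pi.add_apply,
          condExp_of_stronglyMeasurable (ℱ.le n) hjump_meas hjump]

theorem tendsto_ae_condExp_abs_sub_condExp (hf : Integrable f μ)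
    (hfm : StronglyMeasurable[⨆ n, ℱ n] f) :
    ∀ᵐ ω ∂μ, Tendsto (fun n => μ[fun x => |f x - μ[f | ℱ n] x| | ℱ n] ω) atTop (𝓝 0) := by
  have hlim := hf.tendsto_ae_condExp hfm
  have hlim_dev : ∀ᵐ ω ∂μ, ∀ m, Tendsto (fun n => μ[fun x => |f x - μ[f | ℱ m] x| | ℱ n] ω)
      atTop (𝓝 |f ω - μ[f | ℱ m] ω|) := ae_all_iff.2 fun m =>
    (hf.sub integrable_condExp).abs.tendsto_ae_condExp
      (hfm.sub (stronglyMeasurable_condExp.mono (le_iSup _ m))).norm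
  have hnonneg : ∀ᵐ ω ∂μ, ∀ n, 0 ≤ μ[fun x => |f x - μ[f | ℱ n] x| | ℱ n] ω :=
    ae_all_iff.2 fun n => condExp_nonneg (.of_forall fun x => abs_nonneg _)
  have hchain : ∀ᵐ ω ∂μ, ∀ m n, m ≤ n → μ[fun x => |f x - μ[f | ℱ n] x| | ℱ n] ω ≤
      μ[fun x => |f x - μ[f | ℱ m] x| | ℱ n] ω + |μ[f | ℱ m] ω - μ[f | ℱ n] ω| := by
    simp only [ae_all_iff, eventually_imp_distrib_left]
    exact fun m n hmn => condExp_abs_sub_condExp_le hf hmn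
  filter_upwards [hlim, hlim_dev, hnonneg, hchain] with ω hF hdev hpos hle
  exact tendsto_zero_of_le_add_abs_sub hpos hF hdev hle

end Martingale

section TotalVariation

variable {α : Type*} [MeasurableSpace α]

noncomputable def tvDist (q q' : Measure α) : ℝ :=
  ⨆ (A : Set α) (_ : MeasurableSet A), |(q A).toReal - (q' A).toReal|

theorem tvDist_nonneg (q q' : Measure α) : 0 ≤ tvDist q q' :=
  Real.iSup_nonneg fun _ => Real.iSup_nonneg fun _ => abs_nonneg _

theorem tvDist_le {q q' : Measure α} {B : ℝ}
    (h : ∀ A, MeasurableSet A → |(q A).toReal - (q' A).toReal| ≤ B) : tvDist q q' ≤ B := by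
  have hB : 0 ≤ B := (abs_nonneg _).trans (h ∅ .empty)
  exact Real.iSup_le (fun A => Real.iSup_le (h A) hB) hB

theorem abs_cond_sub_cond_le {p p' : Measure α} [IsFiniteMeasure p] [IsFiniteMeasure p']
    (hac : p ≪ p') {Γ : Set α} (hΓ : MeasurableSet Γ) (hpΓ : p Γ ≠ 0) (hp'Γ : p' Γ ≠ 0)
    (A : Set α) :
    |(p[A | Γ]).toReal - (p'[A | Γ]).toReal| ≤
      (⨍ x in Γ, |(p.rnDeriv p' x).toReal - p.real Γ / p'.real Γ| ∂p') /
        (p.real Γ / p'.real Γ) := by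
  set f := fun x => (p.rnDeriv p' x).toReal
  set c := p.real Γ / p'.real Γ
  have ha : 0 < p.real Γ := ENNReal.toReal_pos hpΓ (measure_ne_top _ _)
  have hb : 0 < p'.real Γ := ENNReal.toReal_pos hp'Γ (measure_ne_top _ _)
  have hint : Integrable (fun x => f x - c) p' :=
    Measure.integrable_toReal_rnDeriv.sub (integrable_const c)
  have hdiff : (p[A | Γ]).toReal - (p'[A | Γ]).toReal =
      (∫ x in Γ ∩ A, (f x - c) ∂p') / p.real Γ := by
    rw [cond_apply hΓ, cond_apply hΓ, integral_sub Measure.integrable_toReal_rnDeriv.integrableOn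
      (integrableOn_const (measure_ne_top _ _)), Measure.setIntegral_toReal_rnDeriv hac,
      setIntegral_const]
    simp only [ENNReal.toReal_mul, ENNReal.toReal_inv, ← measureReal_def, smul_eq_mul, c]
    field_simp
  calc |(p[A | Γ]).toReal - (p'[A | Γ]).toReal|
      = |∫ x in Γ ∩ A, (f x - c) ∂p'| / p.real Γ := by rw [hdiff, abs_div, abs_of_pos ha]
    _ ≤ (∫ x in Γ, |f x - c| ∂p') / p.real Γ := by
        gcongr
        exact abs_integral_le_integral_abs.trans (setIntegral_mono_set hint.abs.integrableOn
          (.of_forall fun _ => abs_nonneg _) Set.inter_subset_left.eventuallyLE)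
    _ = (⨍ x in Γ, |f x - c| ∂p') / c := by
        rw [setAverage_eq, smul_eq_mul]
        generalize ∫ x in Γ, |f x - c| ∂p' = I
        simp only [c]
        field_simp

end TotalVariation

theorem ae_pos_toReal_rnDeriv {α : Type*} [MeasurableSpace α] {p p' : Measure α}
    [SigmaFinite p] [SigmaFinite p'] (hac : p ≪ p') :
    ∀ᵐ x ∂p, 0 < (p.rnDeriv p' x).toReal := by
  filter_upwards [Measure.rnDeriv_pos hac, hac.ae_le (Measure.rnDeriv_lt_top p p')]
    with x hpos hfin using ENNReal.toReal_pos hpos.ne' hfin.ne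

theorem mem_cylinder_seg {ω x : ℕ → Bool} {n : ℕ} :
    x ∈ cylinder (seg ω n) ↔ ∀ i < n, x i = ω i := by
  simp only [_root_.cylinder, seg, List.get_eq_getElem, List.getElem_ofFn, Fin.forall_iff,
    List.length_ofFn, Set.mem_ofPred_eq]

/-- `piLE n` sees the coordinates `0, …, n`, so its atoms are the cylinders of length `n + 1`. -/
theorem cylinder_seg_succ (ω : ℕ → Bool) (n : ℕ) :
    cylinder (seg ω (n + 1)) =
      Preorder.restrictLe (π := fun _ => Bool) n ⁻¹' {Preorder.restrictLe n ω} := by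
  ext x
  simp only [mem_cylinder_seg, Order.lt_add_one_iff, Set.mem_preimage, Set.mem_singleton_iff,
    funext_iff, Preorder.restrictLe_apply, Subtype.forall, Set.mem_Iic]

theorem measurableSet_piLE_cylinder_seg (ω : ℕ → Bool) (n : ℕ) :
    MeasurableSet[Filtration.piLE n] (cylinder (seg ω (n + 1))) := by
  rw [cylinder_seg_succ]
  exact ⟨_, measurableSet_singleton _, rfl⟩

theorem StronglyMeasurable.apply_eq_of_mem_cylinder_seg {n : ℕ} {h : (ℕ → Bool) → ℝ}
    (hh : StronglyMeasurable[Filtration.piLE n] h) {ω x : ℕ → Bool}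
    (hx : x ∈ cylinder (seg ω (n + 1))) : h x = h ω :=
  hh.dependsOn_of_piLE fun i hi => mem_cylinder_seg.1 hx i (Nat.lt_succ_of_le hi)

theorem condExp_piLE_apply_eq_setAverage {μ : Measure (ℕ → Bool)} [IsFiniteMeasure μ]
    (hμ : ∀ x : List Bool, 0 < μ (cylinder x)) {g : (ℕ → Bool) → ℝ} (hg : Integrable g μ)
    (ω : ℕ → Bool) (n : ℕ) :
    μ[g | Filtration.piLE n] ω = ⨍ x in cylinder (seg ω (n + 1)), g x ∂μ :=
  condExp_apply_eq_setAverage (Filtration.piLE.le n) hg (measurableSet_piLE_cylinder_seg ω n)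
    (hμ _).ne' fun _ hx =>
      StronglyMeasurable.apply_eq_of_mem_cylinder_seg stronglyMeasurable_condExp hx

theorem tvDist_cond_cylinder_le {p p' : Measure (ℕ → Bool)}
    [IsFiniteMeasure p] [IsFiniteMeasure p']
    (hp : ∀ x : List Bool, 0 < p (cylinder x)) (hp' : ∀ x : List Bool, 0 < p' (cylinder x))
    (hac : p ≪ p') (ω : ℕ → Bool) (n : ℕ) :
    let f := fun x => (p.rnDeriv p' x).toReal
    tvDist (p[|cylinder (seg ω (n + 1))]) (p'[|cylinder (seg ω (n + 1))]) ≤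
      p'[fun x => |f x - p'[f | Filtration.piLE n] x| | Filtration.piLE n] ω /
        p'[f | Filtration.piLE n] ω := by
  intro f
  set Γ := cylinder (seg ω (n + 1))
  have hf : Integrable f p' := Measure.integrable_toReal_rnDeriv
  have hdev : Integrable (fun x => |f x - p'[f | Filtration.piLE n] x|) p' :=
    (hf.sub integrable_condExp).abs
  have hΓ : MeasurableSet Γ := Filtration.piLE.le n _ (measurableSet_piLE_cylinder_seg ω n)
  have hF : p'[f | Filtration.piLE n] ω = p.real Γ / p'.real Γ := by
    rw [condExp_piLE_apply_eq_setAverage hp' hf, setAverage_eq,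
      Measure.setIntegral_toReal_rnDeriv hac, smul_eq_mul, inv_mul_eq_div]
  have hH : p'[fun x => |f x - p'[f | Filtration.piLE n] x| | Filtration.piLE n] ω =
      ⨍ x in Γ, |f x - p.real Γ / p'.real Γ| ∂p' := by
    rw [condExp_piLE_apply_eq_setAverage hp' hdev, ← hF]
    refine setAverage_congr_fun hΓ (ae_of_all _ fun x hx => ?_)
    rw [StronglyMeasurable.apply_eq_of_mem_cylinder_seg stronglyMeasurable_condExp hx]
  rw [hH, hF]
  exact tvDist_le fun A _ => abs_cond_sub_cond_le hac hΓ (hp _).ne' (hp' _).ne' A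

/-- Blackwell–Dubins merging: if `p` and `p'` are open-minded probability measures on
Cantor space and `p` is absolutely continuous with respect to `p'`, then `p`-almost surely
the total variational distance between the conditional measures given the first `n` bits
tends to `0`. -/
theorem merging_of_opinions (p p' : Measure (ℕ → Bool))
    [IsProbabilityMeasure p] [IsProbabilityMeasure p']
    (hp : ∀ x : List Bool, 0 < p (cylinder x))
    (hp' : ∀ x : List Bool, 0 < p' (cylinder x))
    (hac : p ≪ p') :
    ∀ᵐ ω ∂p, Tendsto
      (fun n : ℕ => ⨆ (A : Set (ℕ → Bool)) (_ : MeasurableSet A),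
        |((p[|cylinder (seg ω n)]) A).toReal - ((p'[|cylinder (seg ω n)]) A).toReal|)
      atTop (nhds 0) := by
  set f := fun x => (p.rnDeriv p' x).toReal
  have hf : Integrable f p' := Measure.integrable_toReal_rnDeriv
  have hfm : StronglyMeasurable[⨆ n, Filtration.piLE n] f := by
    rw [iSup_piLE]
    exact (Measure.measurable_rnDeriv p p').ennreal_toReal.stronglyMeasurable
  filter_upwards [hac.ae_le (hf.tendsto_ae_condExp hfm),
    hac.ae_le (tendsto_ae_condExp_abs_sub_condExp hf hfm), ae_pos_toReal_rnDeriv hac]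
    with ω hF hdev hpos
  rw [← tendsto_add_atTop_iff_nat 1]
  refine squeeze_zero (fun n => tvDist_nonneg _ _) (tvDist_cond_cylinder_le hp hp' hac ω) ?_
  simpa [f, Pi.div_def] using hdev.div hF hpos.ne'
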